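/- Let u : ∂D → ℝ be continuous with u(e^{iθ}) = 0 for all |θ| ≤ π/2, and let ũ be its Poisson (harmonic) extension to D, ũ(z) := (1/2π) ∫_{−π}^{π} (1 − |z|²) |e^{iθ} − z|^{−2} u(e^{iθ}) dθ. Then the limit lim_{x → 1⁻} ũ(x)/(x − 1) exists and equals (1/2π) ∫_{−π}^{π} u(e^{iθ}) / (cos θ − 1) dθ; i.e. the partial derivative ∂_x ũ at the boundary point 1 along the real axis equals this integral (which is well defined since u vanishes on the arc {|θ| ≤ π/2} and cos θ − 1 ≤ −1 on its complement). -/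

import Mathlib

open Set Real Filter intervalIntegral

noncomputable section

/-- The Poisson (harmonic) extension of a boundary function `u(e^{iθ})`, evaluated at a real
point `x` of the disc. -/
def poissonExt (u : ℝ → ℝ) (x : ℝ) : ℝ :=
  (1 / (2 * π)) * ∫ θ in (-π)..π,
    ((1 - x ^ 2) / ‖Complex.exp (θ * Complex.I) - (x : ℂ)‖ ^ 2) * u θ

/-!
Dividing the Poisson kernel `(1 - x²) / |e^{iθ} - x|²` by `x - 1` leaves the kernel
`-(1 + x) / (1 - 2x cos θ + x²)`, which converges to `1 / (cos θ - 1)` as `x → 1` wherever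
`cos θ ≠ 1`. On the support of `u` inside `[-π, π]` we have `cos θ ≤ 0`, so there the kernel is
bounded by `2` uniformly in `x ∈ [0, 1]`, and dominated convergence gives the limit.
-/

open MeasureTheory

def poissonDiffQuotKernel (x θ : ℝ) : ℝ :=
  -(1 + x) / (1 - 2 * x * cos θ + x ^ 2)

lemma norm_exp_mul_I_sub_ofReal_sq (x θ : ℝ) :
    ‖Complex.exp (θ * Complex.I) - (x : ℂ)‖ ^ 2 = 1 - 2 * x * cos θ + x ^ 2 := by
  rw [Complex.sq_norm, Complex.normSq_apply]
  simp only [Complex.sub_re, Complex.sub_im, Complex.exp_ofReal_mul_I_re,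
    Complex.exp_ofReal_mul_I_im, Complex.ofReal_re, Complex.ofReal_im, sub_zero]
  linear_combination sin_sq_add_cos_sq θ

lemma poissonExt_div_sub_one (u : ℝ → ℝ) {x : ℝ} (hx : x ≠ 1) :
    poissonExt u x / (x - 1)
      = 1 / (2 * π) * ∫ θ in (-π)..π, poissonDiffQuotKernel x θ * u θ := by
  rw [poissonExt, mul_div_assoc, ← intervalIntegral.integral_div]
  congr 1
  refine integral_congr fun θ _ => ?_
  set D := 1 - 2 * x * cos θ + x ^ 2
  rw [norm_exp_mul_I_sub_ofReal_sq, poissonDiffQuotKernel,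
    show (1 - x ^ 2) / D * u θ / (x - 1) = (x - 1) * (-(1 + x) / D * u θ) / (x - 1) by ring,
    mul_div_cancel_left₀ _ (sub_ne_zero.mpr hx)]

lemma abs_poissonDiffQuotKernel_le_two {x θ : ℝ} (hx0 : 0 ≤ x) (hx1 : x ≤ 1)
    (hcos : cos θ ≤ 0) : |poissonDiffQuotKernel x θ| ≤ 2 := by
  have hD : 1 ≤ 1 - 2 * x * cos θ + x ^ 2 := by nlinarith
  rw [poissonDiffQuotKernel, abs_div, abs_neg, abs_of_nonneg (by linarith),
    abs_of_pos (by linarith), div_le_iff₀ (by linarith)]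
  nlinarith

lemma poissonDiffQuotKernel_one (θ : ℝ) :
    poissonDiffQuotKernel 1 θ = 1 / (cos θ - 1) := by
  rw [poissonDiffQuotKernel, show 1 - 2 * 1 * cos θ + (1:ℝ) ^ 2 = -2 * (cos θ - 1) by ring,
    show -(1 + 1 : ℝ) = -2 * 1 by ring, mul_div_mul_left _ _ (by norm_num)]

lemma continuousAt_poissonDiffQuotKernel {θ : ℝ} (hcos : cos θ ≠ 1) :
    ContinuousAt (poissonDiffQuotKernel · θ) 1 := by
  have hD : 1 - 2 * 1 * cos θ + (1:ℝ) ^ 2 ≠ 0 := fun h => hcos (by linarith)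
  exact ContinuousAt.div (by fun_prop) (by fun_prop) hD

lemma cos_nonpos_of_apply_ne_zero {u : ℝ → ℝ} (hvan : ∀ θ : ℝ, |θ| ≤ π / 2 → u θ = 0) {θ : ℝ}
    (hθ : θ ∈ Ioc (-π) π) (hu : u θ ≠ 0) : cos θ ≤ 0 := by
  rw [← cos_abs]
  exact cos_nonpos_of_pi_div_two_le_of_le (not_le.mp (mt (hvan θ) hu)).le
    (by linarith [abs_le.mpr ⟨hθ.1.le, hθ.2⟩, pi_pos])

lemma tendsto_integral_poissonDiffQuotKernel_mul {u : ℝ → ℝ} (hu : Continuous u)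
    (hvan : ∀ θ : ℝ, |θ| ≤ π / 2 → u θ = 0) :
    Tendsto (fun x => ∫ θ in (-π)..π, poissonDiffQuotKernel x θ * u θ) (nhdsWithin 1 (Iio 1))
      (nhds (∫ θ in (-π)..π, u θ / (cos θ - 1))) := by
  obtain ⟨C, hC⟩ := (isCompact_Icc (a := -π) (b := π)).exists_bound_of_continuousOn
    hu.continuousOn
  have hC0 : 0 ≤ C := (norm_nonneg _).trans (hC 0 ⟨by linarith [pi_pos], by linarith [pi_pos]⟩)
  have hIcc : Icc (0:ℝ) 1 ∈ nhdsWithin 1 (Iio 1) :=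
    mem_of_superset (Ioo_mem_nhdsLT (by norm_num)) Ioo_subset_Icc_self
  refine tendsto_integral_filter_of_dominated_convergence (fun _ => 2 * C)
    (Eventually.of_forall fun x => ?_) ?_ intervalIntegrable_const (ae_of_all _ fun θ hθ => ?_)
  · unfold poissonDiffQuotKernel
    exact (by fun_prop : Measurable _).aestronglyMeasurable
  · filter_upwards [hIcc] with x hx
    refine ae_of_all _ fun θ hθ => ?_
    rw [uIoc_of_le (by linarith [pi_pos])] at hθ
    by_cases h : u θ = 0
    · simp [h, hC0]
    rw [norm_mul]
    exact mul_le_mul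
      (abs_poissonDiffQuotKernel_le_two hx.1 hx.2 (cos_nonpos_of_apply_ne_zero hvan hθ h))
      (hC θ (Ioc_subset_Icc_self hθ)) (norm_nonneg _) zero_le_two
  · rw [uIoc_of_le (by linarith [pi_pos])] at hθ
    by_cases h : u θ = 0
    · simp [h]
    have hcos : cos θ ≠ 1 := by linarith [cos_nonpos_of_apply_ne_zero hvan hθ h]
    rw [div_eq_mul_one_div, mul_comm, ← poissonDiffQuotKernel_one]
    exact ((continuousAt_poissonDiffQuotKernel hcos).tendsto.mul_const _).mono_left
      nhdsWithin_le_nhds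

theorem poisson_boundary_derivative_general (u : ℝ → ℝ) (hu : Continuous u)
    (hvan : ∀ θ : ℝ, |θ| ≤ π / 2 → u θ = 0) :
    Tendsto (fun x : ℝ => poissonExt u x / (x - 1)) (nhdsWithin 1 (Iio 1))
      (nhds ((1 / (2 * π)) * ∫ θ in (-π)..π, u θ / (Real.cos θ - 1))) := by
  refine ((tendsto_integral_poissonDiffQuotKernel_mul hu hvan).const_mul _).congr' ?_
  filter_upwards [self_mem_nhdsWithin] with x hx
  exact (poissonExt_div_sub_one u hx.ne).symm

/-- If `u : ∂D → ℝ` is continuous and vanishes on the arc `{|θ| ≤ π/2}`, then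
the radial boundary derivative of its Poisson extension at the point `1` along the real axis
exists and equals `(1/2π) ∫_{-π}^{π} u(e^{iθ}) / (cos θ - 1) dθ`:
`lim_{x → 1⁻} ũ(x)/(x - 1) = (1/2π) ∫_{-π}^{π} u(e^{iθ})/(cos θ - 1) dθ`. -/
theorem poisson_boundary_derivative (u : ℝ → ℝ) (hu : Continuous u)
    (hper : Function.Periodic u (2 * π)) (hvan : ∀ θ : ℝ, |θ| ≤ π / 2 → u θ = 0) :
    Tendsto (fun x : ℝ => poissonExt u x / (x - 1)) (nhdsWithin 1 (Iio 1))
      (nhds ((1 / (2 * π)) * ∫ θ in (-π)..π, u θ / (Real.cos θ - 1))) :=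
  poisson_boundary_derivative_general u hu hvan

end
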